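/- arXiv:math/0010306 — 4 statements merged into one kernel-verified Lean document; each statement's English description precedes it below -/
import Mathlib

section
/- Let (N,σ) be a model of T_σ, let k ≥ 1, and let φ(x,y) be an L-formula in two k-tuples of free variables such that the relation u < v on k-tuples defined by φ(u,v) is transitive and irreflexive in N. Let a be a k-tuple in N and n < ω, and suppose σ^i(a) < σ^j(a) for all i < j ≤ n, where σ is applied componentwise to tuples. Then the tuple σ^n(a) satisfies σ^i(a) < x for every i < n, but there is no k-tuple b in N with a < σ(b), σ(b) < b, and b < σ^n(a). -/
universe u v w

open FirstOrder Language Structure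

/-- Let `(N, σ)` be a model of `T_σ` (i.e. `N ⊨ T` and `σ` is an
`L`-automorphism of `N`), `k ≥ 1`, and `φ(x,y)` an `L`-formula defining a transitive
irreflexive relation `<` on `k`-tuples of `N`.  Let `a` be a `k`-tuple in `N`, `n < ω`,
and suppose `σ^i(a) < σ^j(a)` for all `i < j ≤ n` (with `σ` applied componentwise).
Then `σ^n(a)` satisfies `σ^i(a) < x` for every `i < n`, but there is no `k`-tuple `b`
in `N` with `a < σ(b)`, `σ(b) < b`, and `b < σ^n(a)`. -/
theorem stmt_4 (L : FirstOrder.Language.{u, v}) (T : L.Theory)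
    (N : Type w) (_ : L.Structure N) (hN : N ⊨ T) (σ : N ≃[L] N)
    (k : ℕ) (hk : 1 ≤ k) (φ : L.Formula (Fin k ⊕ Fin k))
    (htrans : Transitive (fun x y : Fin k → N => φ.Realize (Sum.elim x y)))
    (hirrefl : Irreflexive (fun x y : Fin k → N => φ.Realize (Sum.elim x y)))
    (a : Fin k → N) (n : ℕ)
    (hchain : ∀ i j : ℕ, i < j → j ≤ n →
      φ.Realize (Sum.elim (fun m => (⇑σ)^[i] (a m)) (fun m => (⇑σ)^[j] (a m)))) :
    (∀ i : ℕ, i < n →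
      φ.Realize (Sum.elim (fun m => (⇑σ)^[i] (a m)) (fun m => (⇑σ)^[n] (a m)))) ∧
    ¬ ∃ b : Fin k → N,
        φ.Realize (Sum.elim a (fun m => σ (b m))) ∧
        φ.Realize (Sum.elim (fun m => σ (b m)) b) ∧
        φ.Realize (Sum.elim b (fun m => (⇑σ)^[n] (a m))) := by
  -- σ preserves the relation
  have hpres : ∀ x y : Fin k → N, φ.Realize (Sum.elim x y) →
      φ.Realize (Sum.elim (fun m => σ (x m)) (fun m => σ (y m))) := by
    intro x y h
    have := (StrongHomClass.realize_formula σ φ (v := Sum.elim x y)).2 h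
    convert this using 1
    funext m; cases m <;> rfl
  refine ⟨fun i hi => hchain i n hi le_rfl, ?_⟩
  rintro ⟨b, hab, hsb, hbn⟩
  -- σ^j(b) decreasing: σ^{j+1}(b) < σ^j(b)
  have hdec : ∀ j : ℕ, φ.Realize (Sum.elim (fun m => (⇑σ)^[j+1] (b m))
      (fun m => (⇑σ)^[j] (b m))) := by
    intro j
    induction j with
    | zero => simpa using hsb
    | succ j ih =>
        have := hpres _ _ ih
        simpa [Function.iterate_succ_apply'] using this
  -- σ^j(b) < b for all j ≥ 1, in fact σ^j(b) ≤ b: prove σ^{j+1}(b) < b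
  have hle : ∀ j : ℕ, φ.Realize (Sum.elim (fun m => (⇑σ)^[j+1] (b m)) b) := by
    intro j
    induction j with
    | zero => simpa using hsb
    | succ j ih => exact htrans (hdec (j+1)) ih
  -- σ^i(a) < σ^{i+1}(b)
  have haux : ∀ i : ℕ, φ.Realize (Sum.elim (fun m => (⇑σ)^[i] (a m))
      (fun m => (⇑σ)^[i+1] (b m))) := by
    intro i
    induction i with
    | zero => simpa using hab
    | succ i ih =>
        have := hpres _ _ ih
        simpa [Function.iterate_succ_apply'] using this
  -- σ^n(a) < b
  have h1 : φ.Realize (Sum.elim (fun m => (⇑σ)^[n] (a m)) b) :=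
    htrans (haux n) (hle n)
  exact hirrefl _ (htrans h1 hbn)
end

section
/- Let N be an L-structure that is κ-saturated for some uncountable cardinal κ, let k ≥ 1, and let < be a transitive irreflexive binary relation on k-tuples of N defined by an L-formula. Let (a_i)_{i<ω} be k-tuples of N with a_i < a_j for all i < j < ω, and let P = { c : c is a k-tuple of N and a_i < c for all i < ω }. Then for all d₁, d₂ ∈ P there is d₃ ∈ P with d₃ < d₁ and d₃ < d₂. -/
universe u v w

open FirstOrder Language Structure Cardinal

/-- An `L`-structure `N` is `κ`-saturated if every set of `L`-formulas in one (finite)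
tuple of variables with parameters from a subset of `N` of cardinality `< κ`, every
finite subset of which is realized in `N`, is realized in `N`. -/
def IsSaturatedStruct (L : FirstOrder.Language.{u, v}) (N : Type w) [L.Structure N]
    (κ : Cardinal.{w}) : Prop :=
  ∀ A : Set N, #A < κ →
    ∀ (n : ℕ) (p : Set ((L[[↥A]]).Formula (Fin n))),
      (∀ q : Finset ((L[[↥A]]).Formula (Fin n)), ↑q ⊆ p →
        ∃ x : Fin n → N, ∀ ψ ∈ q, ψ.Realize x) →
      ∃ x : Fin n → N, ∀ ψ ∈ p, ψ.Realize x

/-- Let `N` be a `κ`-saturated `L`-structure for some uncountable `κ`,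
`k ≥ 1`, and `<` a transitive irreflexive relation on `k`-tuples of `N` defined by an
`L`-formula `φ`.  Let `(a_i)_{i<ω}` be `k`-tuples of `N` with `a_i < a_j` for `i < j`,
and let `P = { c | a_i < c for all i }`.  Then for all `d₁, d₂ ∈ P` there is `d₃ ∈ P`
with `d₃ < d₁` and `d₃ < d₂`. -/
theorem stmt_6 (L : FirstOrder.Language.{u, v}) (N : Type w) (_ : L.Structure N)
    (κ : Cardinal.{w}) (hκ : ℵ₀ < κ) (hsat : IsSaturatedStruct L N κ)
    (k : ℕ) (hk : 1 ≤ k) (φ : L.Formula (Fin k ⊕ Fin k))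
    (htrans : Transitive (fun x y : Fin k → N => φ.Realize (Sum.elim x y)))
    (hirrefl : Irreflexive (fun x y : Fin k → N => φ.Realize (Sum.elim x y)))
    (a : ℕ → Fin k → N)
    (hchain : ∀ i j : ℕ, i < j → φ.Realize (Sum.elim (a i) (a j))) :
    ∀ d₁ ∈ {c : Fin k → N | ∀ i : ℕ, φ.Realize (Sum.elim (a i) c)},
      ∀ d₂ ∈ {c : Fin k → N | ∀ i : ℕ, φ.Realize (Sum.elim (a i) c)},
        ∃ d₃ ∈ {c : Fin k → N | ∀ i : ℕ, φ.Realize (Sum.elim (a i) c)},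
          φ.Realize (Sum.elim d₃ d₁) ∧ φ.Realize (Sum.elim d₃ d₂) := by
  intro d₁ hd₁ d₂ hd₂
  -- the parameter set
  set A : Set N :=
    (Set.range fun p : ℕ × Fin k => a p.1 p.2) ∪ Set.range d₁ ∪ Set.range d₂ with hA
  have hAcount : A.Countable := by
    apply Set.Countable.union
    apply Set.Countable.union
    · exact Set.countable_range _
    · exact Set.countable_range _
    · exact Set.countable_range _
  have hAκ : #A < κ := lt_of_le_of_lt hAcount.le_aleph0 hκ
  have hmema : ∀ i j, a i j ∈ A := fun i j =>
    Or.inl (Or.inl ⟨(i, j), rfl⟩)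
  have hmemd₁ : ∀ j, d₁ j ∈ A := fun j => Or.inl (Or.inr ⟨j, rfl⟩)
  have hmemd₂ : ∀ j, d₂ j ∈ A := fun j => Or.inr ⟨j, rfl⟩
  -- φ as an L[[A]]-formula
  let φ' : (L[[↥A]]).Formula (Fin k ⊕ Fin k) := (L.lhomWithConstants ↥A).onFormula φ
  -- `low b` expresses `b < x`; `up b` expresses `x < b`
  let lowFml : (b : Fin k → ↥A) → (L[[↥A]]).Formula (Fin k) := fun b =>
    φ'.subst (Sum.elim (fun j => Constants.term (L.con (b j))) Term.var)
  let upFml : (b : Fin k → ↥A) → (L[[↥A]]).Formula (Fin k) := fun b =>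
    φ'.subst (Sum.elim Term.var (fun j => Constants.term (L.con (b j))))
  have hlow : ∀ (b : Fin k → ↥A) (x : Fin k → N),
      (lowFml b).Realize x ↔ φ.Realize (Sum.elim (fun j => (b j : N)) x) := by
    intro b x
    simp only [lowFml, Formula.Realize, BoundedFormula.realize_subst, φ']
    rw [← Formula.Realize, LHom.realize_onFormula]
    apply iff_of_eq; congr 1
    funext j; cases j <;> simp
  have hup : ∀ (b : Fin k → ↥A) (x : Fin k → N),
      (upFml b).Realize x ↔ φ.Realize (Sum.elim x (fun j => (b j : N))) := by
    intro b x
    simp only [upFml, Formula.Realize, BoundedFormula.realize_subst, φ']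
    rw [← Formula.Realize, LHom.realize_onFormula]
    apply iff_of_eq; congr 1
    funext j; cases j <;> simp
  let aA : ℕ → Fin k → ↥A := fun i j => ⟨a i j, hmema i j⟩
  let d₁A : Fin k → ↥A := fun j => ⟨d₁ j, hmemd₁ j⟩
  let d₂A : Fin k → ↥A := fun j => ⟨d₂ j, hmemd₂ j⟩
  let p : Set ((L[[↥A]]).Formula (Fin k)) :=
    (Set.range fun i => lowFml (aA i)) ∪ {upFml d₁A, upFml d₂A}
  -- finite satisfiability
  have hfin : ∀ q : Finset ((L[[↥A]]).Formula (Fin k)), ↑q ⊆ p →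
      ∃ x : Fin k → N, ∀ ψ ∈ q, ψ.Realize x := by
    intro q hq
    classical
    let f : (L[[↥A]]).Formula (Fin k) → ℕ := fun ψ =>
      if h : ∃ i, ψ = lowFml (aA i) then h.choose + 1 else 0
    refine ⟨a (q.sup f), fun ψ hψ => ?_⟩
    rcases hq hψ with hlo | hup' | hup'
    · obtain ⟨i, rfl⟩ := hlo
      have hex : ∃ i', lowFml (aA i) = lowFml (aA i') := ⟨i, rfl⟩
      have h1 : f (lowFml (aA i)) = hex.choose + 1 := dif_pos hex
      have h2 : f (lowFml (aA i)) ≤ q.sup f := Finset.le_sup hψ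
      show (lowFml (aA i)).Realize (a (q.sup f))
      rw [hex.choose_spec, hlow]
      exact hchain _ _ (by omega)
    · rw [hup', hup]
      exact hd₁ _
    · rw [Set.mem_singleton_iff.mp hup', hup]
      exact hd₂ _
  obtain ⟨x, hx⟩ := hsat A hAκ k p hfin
  refine ⟨x, fun i => ?_, ?_, ?_⟩
  · have := hx _ (Or.inl ⟨i, rfl⟩)
    rwa [hlow] at this
  · have := hx _ (Or.inr (Or.inl rfl))
    rwa [hup] at this
  · have := hx _ (Or.inr (Or.inr rfl))
    rwa [hup] at this
end

section
/- Let α and β be sets, r a transitive binary relation on α, σ : α → α a bijection such that for all u, v ∈ α, r(u,v) holds if and only if r(σ(u),σ(v)), and S a subset of α with σ(S) = S. Let g : β → β be a bijection and F : α → 𝒫(β) a map such that for all s, t ∈ S: if r(t,s) then F(t) ⊆ F(s), and F(σ(s)) = g[F(s)] (the image of F(s) under g). Suppose S is downward r-directed (for all d₁, d₂ ∈ S there is d₃ ∈ S with r(d₃,d₁) and r(d₃,d₂)), and suppose c ∈ S satisfies F(d) = F(c) for every d ∈ S with r(d,c). Then g[F(c)] = F(c). -/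
/-- Let `α, β` be sets, `r` a transitive binary relation on `α`,
`σ : α → α` a bijection with `r u v ↔ r (σ u) (σ v)`, and `S ⊆ α` with `σ '' S = S`.
Let `g : β → β` be a bijection and `F : α → 𝒫(β)` such that on `S`, `r t s → F t ⊆ F s`
and `F (σ s) = g '' F s`.  Suppose `S` is downward `r`-directed and `c ∈ S` satisfies
`F d = F c` for every `d ∈ S` with `r d c`.  Then `g '' F c = F c`. -/
theorem stmt_8 {α : Type*} {β : Type*} (r : α → α → Prop) (htrans : Transitive r)
    (σ : α → α) (hσ : Function.Bijective σ)
    (hσr : ∀ u v : α, r u v ↔ r (σ u) (σ v))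
    (S : Set α) (hσS : σ '' S = S)
    (g : β → β) (hg : Function.Bijective g)
    (F : α → Set β)
    (hmono : ∀ s ∈ S, ∀ t ∈ S, r t s → F t ⊆ F s)
    (hFσ : ∀ s ∈ S, F (σ s) = g '' F s)
    (hdir : ∀ d₁ ∈ S, ∀ d₂ ∈ S, ∃ d₃ ∈ S, r d₃ d₁ ∧ r d₃ d₂)
    (c : α) (hc : c ∈ S) (hmin : ∀ d ∈ S, r d c → F d = F c) :
    g '' F c = F c := by
  have hσc : σ c ∈ S := hσS ▸ ⟨c, hc, rfl⟩
  obtain ⟨d, hdS, hdc, hdσc⟩ := hdir c hc (σ c) hσc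
  -- d = σ e for some e ∈ S
  obtain ⟨e, heS, rfl⟩ : ∃ e ∈ S, σ e = d := by
    have : d ∈ σ '' S := hσS.symm ▸ hdS
    obtain ⟨e, heS, he⟩ := this
    exact ⟨e, heS, he⟩
  have hec : r e c := (hσr e c).mpr hdσc
  have h1 : F e = F c := hmin e heS hec
  have h2 : F (σ e) = F c := hmin (σ e) hdS hdc
  calc g '' F c = g '' F e := by rw [h1]
    _ = F (σ e) := (hFσ e heS).symm
    _ = F c := h2
end

section
/- Let N be an L-structure, A a subset of N, and f : A → N a partial elementary map, i.e., for every L-formula φ(x₁,...,xₙ) and all a₁,...,aₙ ∈ A, N ⊨ φ(a₁,...,aₙ) if and only if N ⊨ φ(f(a₁),...,f(aₙ)). Then there exist an elementary extension N' of N and an L-automorphism τ of N' such that τ(a) = f(a) for every a ∈ A. -/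
/-!
A partial elementary map `a ↦ b` of `M` extends to an elementary embedding `σ` of `M` into an
ultrapower `R` of `M`, with `σ a = b` in the diagonal copy of `M`. By Łoś's theorem it suffices
that every finite set of formulas true of `(a, M)` is satisfied by `(b, η)` for some `η : M → M`,
and that is partial elementarity applied to an existential formula.

Iterating this step back and forth, each time extending the inverse of the map just built, gives
an elementary chain. On its union the maps built at even steps glue to an embedding `τ`; the
maps built at odd steps show that `τ` is onto.
-/

universe u v w

open FirstOrder Language Structure

namespace FirstOrder.Language

variable {L : Language.{u, v}}

section PartialElementary

variable (L) {α : Type*} {M : Type*} [L.Structure M]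

def IsPartialElementary (a b : α → M) : Prop :=
  ∀ n (φ : L.Formula (Fin n)) (x : Fin n → α), φ.Realize (a ∘ x) ↔ φ.Realize (b ∘ x)

variable {L}

theorem ElementaryEmbedding.isPartialElementary {P : Type*} [L.Structure P] (s t : P ↪ₑ[L] M) :
    IsPartialElementary L s t := fun _ φ x => by
  rw [s.map_formula, t.map_formula]

theorem IsPartialElementary.exists_realize_sumElim {β : Type*} {a b : α → M}
    (hab : IsPartialElementary L a b) {φ : L.Formula (α ⊕ β)} {c : β → M}
    (hφ : φ.Realize (Sum.elim a c)) : ∃ d : β → M, φ.Realize (Sum.elim b d) := by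
  classical
  set s := φ.freeVarFinset
  let e := s.toLeft.equivFin
  let g : s → Fin s.toLeft.card ⊕ s.toRight
    | ⟨.inl x, h⟩ => .inl (e ⟨x, Finset.mem_toLeft.2 h⟩)
    | ⟨.inr y, h⟩ => .inr ⟨y, Finset.mem_toRight.2 h⟩
  let ψ : L.Formula _ := φ.restrictFreeVar g
  have realize_ψ (v : α → M) (w : β → M) (d : s.toRight → M) (hd : ∀ y : s.toRight, w y = d y) :
      ψ.Realize (Sum.elim (v ∘ (↑) ∘ e.symm) d) ↔ φ.Realize (Sum.elim v w) :=
    BoundedFormula.realize_restrictFreeVar _ fun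
      | ⟨.inl x, h⟩ => by simp [g]
      | ⟨.inr y, h⟩ => (hd ⟨y, _⟩).symm
  have hex : (ψ.iExs s.toRight).Realize (a ∘ (↑) ∘ e.symm) :=
    Formula.realize_iExs.2 ⟨c ∘ (↑), (realize_ψ a c _ fun _ => rfl).2 hφ⟩
  obtain ⟨d, hd⟩ := Formula.realize_iExs.1 ((hab _ _ _).1 hex)
  exact ⟨fun y => if h : y ∈ s.toRight then d ⟨y, h⟩ else c y,
    (realize_ψ b _ d fun y => dif_pos y.2).1 hd⟩

open Filter in
theorem IsPartialElementary.exists_elementaryEmbedding_comp_eq {α M : Type w} [L.Structure M]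
    {a b : α → M} (hab : IsPartialElementary L a b) :
    ∃ (R : Type (max u v w)) (_ : L.Structure R) (i σ : M ↪ₑ[L] R), σ ∘ a = i ∘ b := by
  rcases isEmpty_or_nonempty M with _ | _
  · let _ : L.Structure (ULift.{max u v} M) := Equiv.inducedStructure Equiv.ulift.symm
    let e : M ↪ₑ[L] ULift.{max u v} M :=
      (Equiv.inducedStructureEquiv Equiv.ulift.symm).toElementaryEmbedding
    exact ⟨ULift M, _, e, e, funext fun x => isEmptyElim (a x)⟩
  classical
  -- The ultrapower is indexed by the finite sets `s` of formulas with parameters in `M`;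
  -- `η s` satisfies at `b` those members of `s` that hold of `a` and the identity.
  let I := Finset (L.Formula (α ⊕ M))
  let U : Ultrafilter I := Ultrafilter.of atTop
  have hη (s : I) :
      ∃ d : M → M, ∀ φ ∈ s, φ.Realize (Sum.elim a id) → φ.Realize (Sum.elim b d) := by
    let t := s.filter fun φ => φ.Realize (Sum.elim a id)
    obtain ⟨d, hd⟩ := hab.exists_realize_sumElim (φ := Formula.iInf fun φ : t => φ.1)
      (Formula.realize_iInf.2 fun φ => (Finset.mem_filter.1 φ.2).2)
    exact ⟨d, fun φ hφ hφa => Formula.realize_iInf.1 hd ⟨φ, Finset.mem_filter.2 ⟨hφ, hφa⟩⟩⟩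
  choose η hη using hη
  have eventually_realize {φ : L.Formula (α ⊕ M)} (hφ : φ.Realize (Sum.elim a id)) :
      ∀ᶠ s in (U : Filter I), φ.Realize (Sum.elim b (η s)) :=
    Eventually.mono (Ultrafilter.of_le atTop (eventually_ge_atTop {φ})) fun s hs =>
      hη s φ (hs (Finset.mem_singleton_self φ)) hφ
  have eventually_realize_comp {n} {φ : L.Formula (Fin n)} {x : Fin n → M} (hφ : φ.Realize x) :
      ∀ᶠ s in (U : Filter I), φ.Realize (η s ∘ x) :=
    (eventually_realize (φ := φ.relabel (Sum.inr ∘ x)) (Formula.realize_relabel.2 hφ)).mono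
      fun _ => Formula.realize_relabel.1
  let R := (U : Filter I).Product fun _ => M
  let i : M ↪ₑ[L] R := ⟨fun q => ((fun _ => q : I → M) : R), fun n φ x =>
    (Ultraproduct.realize_formula_cast φ (fun k _ => x k)).trans eventually_const⟩
  let σ : M ↪ₑ[L] R := ⟨fun q => ((fun s => η s q : I → M) : R), fun n φ x =>
    (Ultraproduct.realize_formula_cast φ (fun k s => η s (x k))).trans
      ⟨fun h => by_contra fun hn => Ultrafilter.eventually_not.1
        (eventually_realize_comp (φ := φ.not) hn) h, eventually_realize_comp⟩⟩
  refine ⟨R, inferInstance, i, σ, funext fun x => Quotient.sound ?_⟩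
  exact eventually_realize (φ := (Term.var (Sum.inr (a x))).equal (Term.var (Sum.inl x))) rfl

end PartialElementary

namespace DirectedSystem

variable {G : ℕ → Type*} [∀ n, L.Structure (G n)] (f : ∀ n, G n ↪[L] G (n + 1))

theorem natLERec_succ_apply {m n : ℕ} (h : m ≤ n) (h' : m ≤ n + 1) (x : G m) :
    natLERec f m (n + 1) h' x = f n (natLERec f m n h x) := by
  simp only [coe_natLERec, Nat.leRecOn_succ h]

theorem apply_natLERec {P : Type*} (g : ∀ n, G n → P) (hg : ∀ n x, g (n + 1) (f n x) = g n x)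
    {m n : ℕ} (h : m ≤ n) (x : G m) : g n (natLERec f m n h x) = g m x := by
  induction n, h using Nat.le_induction with
  | base => rw [map_self]
  | succ n hmn ih => rw [natLERec_succ_apply f hmn, hg, ih]

theorem exists_elementaryEmbedding_natLERec (K : ∀ n, G n ↪ₑ[L] G (n + 1)) {m n : ℕ}
    (h : m ≤ n) : ∃ e : G m ↪ₑ[L] G n, ⇑e = natLERec (fun k => (K k).toEmbedding) m n h := by
  induction n, h using Nat.le_induction with
  | base => exact ⟨.refl L _, funext fun x => (map_self _ x).symm⟩
  | succ n hmn ih =>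
    obtain ⟨e, he⟩ := ih
    exact ⟨(K n).comp e, funext fun x => by rw [natLERec_succ_apply _ hmn, ← he]; rfl⟩

end DirectedSystem

namespace DirectLimit

section Elementary

variable {ι : Type*} [Preorder ι] [IsDirectedOrder ι] [Nonempty ι]
  {G : ι → Type*} [∀ i, L.Structure (G i)] {f : ∀ i j, i ≤ j → G i ↪[L] G j}
  [DirectedSystem G fun i j h => f i j h]

theorem realize_boundedFormula_of (hf : ∀ i j (h : i ≤ j), ∃ e : G i ↪ₑ[L] G j, ⇑e = f i j h)
    {β : Type*} {n : ℕ} (φ : L.BoundedFormula β n) (i : ι) (v : β → G i) (xs : Fin n → G i) :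
    φ.Realize (of L ι G f i ∘ v) (of L ι G f i ∘ xs) ↔ φ.Realize v xs := by
  induction φ generalizing i with
  | falsum => rfl
  | equal =>
    simp only [BoundedFormula.Realize, ← Sum.comp_elim, HomClass.realize_term,
      (of L ι G f i).injective.eq_iff]
  | rel =>
    simp only [BoundedFormula.Realize, ← Sum.comp_elim, HomClass.realize_term]
    exact (of L ι G f i).map_rel _ _
  | imp _ _ ih₁ ih₂ => simp only [BoundedFormula.Realize, ih₁, ih₂]
  | all φ ih =>
    simp only [BoundedFormula.realize_all]
    refine ⟨fun h y => by simpa only [← Fin.comp_snoc, ih] using h (of L ι G f i y), fun h z => ?_⟩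
    obtain ⟨m, y, rfl⟩ := exists_of z
    obtain ⟨k, hik, hmk⟩ := directed_of (· ≤ ·) i m
    obtain ⟨e, he⟩ := hf i k hik
    have hall := (e.map_boundedFormula φ.all v xs).2 (BoundedFormula.realize_all.2 h)
    have hof : ⇑(of L ι G f i) = of L ι G f k ∘ e := funext fun x => by
      rw [Function.comp_apply, he, of_f]
    rw [← of_f (hij := hmk), hof, Function.comp_assoc, Function.comp_assoc, ← Fin.comp_snoc, ih]
    exact BoundedFormula.realize_all.1 hall _

noncomputable def elementaryOf (hf : ∀ i j (h : i ≤ j), ∃ e : G i ↪ₑ[L] G j, ⇑e = f i j h)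
    (i : ι) : G i ↪ₑ[L] DirectLimit G f :=
  ⟨of L ι G f i, fun n φ x => by
    simpa only [Formula.Realize, Unique.eq_default (of L ι G f i ∘ default)] using
      realize_boundedFormula_of hf φ i x default⟩

end Elementary

section Nat

open _root_.FirstOrder.Language.DirectedSystem

variable {G : ℕ → Type*} [∀ n, L.Structure (G n)] (f : ∀ n, G n ↪[L] G (n + 1))

theorem of_natLERec_succ (n : ℕ) (x : G n) :
    of L ℕ G (natLERec f) (n + 1) (f n x) = of L ℕ G (natLERec f) n x := by
  rw [← of_f (hij := n.le_succ), natLERec_succ_apply f le_rfl, map_self]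

theorem exists_equiv_of_shift (τ : ∀ n, G n ↪[L] G (n + 1))
    (comm : ∀ n x, τ (n + 1) (f n x) = f (n + 1) (τ n x))
    (surj : ∀ n y, ∃ x, τ (n + 1) x = f (n + 1) (f n y)) :
    ∃ e : DirectLimit G (natLERec f) ≃[L] DirectLimit G (natLERec f),
      ∀ n x, e (of L ℕ G (natLERec f) n x) = of L ℕ G (natLERec f) (n + 1) (τ n x) := by
  let g n := (of L ℕ G (natLERec f) (n + 1)).comp (τ n)
  let F := lift L ℕ G (natLERec f) g fun _ _ => apply_natLERec f (fun n => g n) fun n x => by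
    simp only [g, Embedding.comp_apply, comm, of_natLERec_succ]
  have hF (n : ℕ) (x : G n) :
      F (of L ℕ G (natLERec f) n x) = of L ℕ G (natLERec f) (n + 1) (τ n x) :=
    lift_of ..
  refine ⟨⟨Equiv.ofBijective F ⟨F.injective, fun z => ?_⟩, F.map_fun', F.map_rel'⟩, hF⟩
  obtain ⟨n, y, rfl⟩ := exists_of z
  obtain ⟨x, hx⟩ := surj n y
  exact ⟨of L ℕ G (natLERec f) (n + 1) x, by rw [hF, hx, of_natLERec_succ, of_natLERec_succ]⟩

end Nat

end DirectLimit

/-- A stage of the back-and-forth construction: `j` is the inclusion of `P` into the next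
structure `Q` of the chain, and `t` approximates the automorphism. -/
structure ElementaryParallelPair (L : Language.{u, v}) where
  P : Type (max u v w)
  Q : Type (max u v w)
  [strP : L.Structure P]
  [strQ : L.Structure Q]
  j : P ↪ₑ[L] Q
  t : P ↪ₑ[L] Q

namespace ElementaryParallelPair

attribute [instance] strP strQ

structure Extension (S : ElementaryParallelPair.{u, v, w} L) where
  R : Type (max u v w)
  [str : L.Structure R]
  i : S.Q ↪ₑ[L] R
  σ : S.Q ↪ₑ[L] R
  σ_comp_t : σ ∘ S.t = i ∘ S.j

attribute [instance] Extension.str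

variable (S : ElementaryParallelPair.{u, v, w} L)

theorem nonempty_extension : Nonempty S.Extension := by
  obtain ⟨R, _, i, σ, h⟩ := (S.t.isPartialElementary S.j).exists_elementaryEmbedding_comp_eq
  exact ⟨⟨R, i, σ, h⟩⟩

noncomputable def next : ElementaryParallelPair.{u, v, w} L :=
  let E := Classical.choice S.nonempty_extension
  ⟨S.Q, E.R, E.i, E.σ⟩

theorem next_t_t (x : S.P) : S.next.t (S.t x) = S.next.j (S.j x) :=
  congrFun (Classical.choice S.nonempty_extension).σ_comp_t x

/-- Two steps at a time: the maps `t` of the even stages then commute with the chain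
(`next_next_t_next_j`), while the odd stages make their union onto. -/
noncomputable def chain : ℕ → ElementaryParallelPair.{u, v, w} L
  | 0 => S
  | n + 1 => (chain n).next.next

theorem next_next_t_next_j (x : S.P) :
    S.next.next.t (S.next.j (S.j x)) = S.next.next.j (S.next.j (S.t x)) :=
  (congrArg S.next.next.t (S.next_t_t x)).symm.trans (S.next.next_t_t (S.t x))

theorem exists_equiv : ∃ (N' : Type (max u v w)) (_ : L.Structure N') (g : S.Q ↪ₑ[L] N')
    (τ : N' ≃[L] N'), ∀ x, τ (g (S.j x)) = g (S.t x) := by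
  let E n := (S.chain n).P
  let K n : E n ↪ₑ[L] E (n + 1) := (S.chain n).next.j.comp (S.chain n).j
  let T n : E n ↪ₑ[L] E (n + 1) := (S.chain n).next.j.comp (S.chain n).t
  let f n := (K n).toEmbedding
  obtain ⟨τ, hτ⟩ := DirectLimit.exists_equiv_of_shift f (fun n => (T n).toEmbedding)
    (fun n x => congrArg (S.chain (n + 1)).next.j ((S.chain n).next_next_t_next_j x))
    (fun n y => ⟨(S.chain n).next.t ((S.chain n).j y),
      congrArg (S.chain (n + 1)).next.j ((S.chain n).next.next_t_t ((S.chain n).j y))⟩)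
  let g := DirectLimit.elementaryOf
    (fun _ _ => DirectedSystem.exists_elementaryEmbedding_natLERec K) 1
  refine ⟨_, inferInstance, g.comp S.next.j, τ, fun x => ?_⟩
  exact (congrArg τ (DirectLimit.of_natLERec_succ f 0 x)).trans (hτ 0 x)

end ElementaryParallelPair

end FirstOrder.Language

/-- Let `N` be an `L`-structure, `A ⊆ N`, and `f : A → N` a partial
elementary map: for every `L`-formula `φ(x₁,…,xₙ)` and all `a₁,…,aₙ ∈ A`,
`N ⊨ φ(a₁,…,aₙ)` iff `N ⊨ φ(f(a₁),…,f(aₙ))`.  Then there exist an elementary extension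
`N'` of `N` and an `L`-automorphism `τ` of `N'` with `τ(a) = f(a)` for every `a ∈ A`. -/
theorem stmt_9 (L : FirstOrder.Language.{u, v}) (N : Type w) (_ : L.Structure N)
    (A : Set N) (f : A → N)
    (helem : ∀ (n : ℕ) (φ : L.Formula (Fin n)) (x : Fin n → A),
      φ.Realize (fun i => (x i : N)) ↔ φ.Realize (fun i => f (x i))) :
    ∃ (N' : Type (max u v w)) (_ : L.Structure N') (g : N ↪ₑ[L] N') (τ : N' ≃[L] N'),
      ∀ a : A, τ (g a) = g (f a) := by
  obtain ⟨R, _, i, σ, hσ⟩ :=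
    IsPartialElementary.exists_elementaryEmbedding_comp_eq (a := Subtype.val) (b := f) helem
  -- the chain lives in `Type (max u v w)`, so it starts from a copy of `N` in that universe
  let _ : L.Structure (ULift.{max u v} N) := Equiv.inducedStructure Equiv.ulift.symm
  let e : ULift.{max u v} N ↪ₑ[L] N :=
    (Equiv.inducedStructureEquiv Equiv.ulift.symm).symm.toElementaryEmbedding
  obtain ⟨N', _, g, τ, hτ⟩ :=
    (⟨ULift N, R, i.comp e, σ.comp e⟩ : ElementaryParallelPair.{u, v, w} L).exists_equiv
  exact ⟨N', _, g.comp i, τ, fun a => (hτ ⟨a⟩).trans (congrArg g (congrFun hσ a))⟩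
end
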